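/- arXiv:2104.14023 — 2 statements merged into one kernel-verified Lean document; each statement's English description precedes it below -/
import Mathlib

section
/- For probability measures μ on ℝ^p, ν on ℝ^q, υ₁ on ℝ^p, υ₂ on ℝ^q with finite second moments, W₂²(μ ⊗ ν, υ₁ ⊗ υ₂) = W₂²(μ, υ₁) + W₂²(ν, υ₂), i.e., the squared 2-Wasserstein distance between product measures decomposes as the sum of the squared distances between the factors. -/
open MeasureTheory

/-- The set of couplings of two measures. -/
def Couplings {α β : Type*} [MeasurableSpace α] [MeasurableSpace β]
    (μ : Measure α) (ν : Measure β) : Set (Measure (α × β)) :=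
  {γ | γ.map Prod.fst = μ ∧ γ.map Prod.snd = ν}

/-- Squared 2-Wasserstein distance between measures on ℝ^n (Euclidean cost). -/
noncomputable def W2sq {n : ℕ} (μ ν : Measure (Fin n → ℝ)) : ℝ :=
  sInf { c | ∃ γ ∈ Couplings μ ν,
    c = ∫ w, (∑ i, (w.1 i - w.2 i) ^ 2) ∂γ }

/-- Finite second moment. -/
def HasFiniteSecondMoment {n : ℕ} (μ : Measure (Fin n → ℝ)) : Prop :=
  Integrable (fun x => ∑ i, (x i) ^ 2) μ

/-- Concatenation map `(ℝ^p) × (ℝ^q) → ℝ^(p+q)`. -/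
def pairToVec (p q : ℕ) : (Fin p → ℝ) × (Fin q → ℝ) → (Fin (p + q) → ℝ) :=
  fun z => Fin.append z.1 z.2

/-!
The quadratic cost on `ℝ^(p+q)` is the sum of the costs on the first `p` and the last `q`
coordinates. Concatenating a coupling `γ₁` of `(μ, υ₁)` with a coupling `γ₂` of `(ν, υ₂)`, drawn
independently (under `γ₁ ⊗ γ₂`), gives a coupling of `(μ ⊗ ν, υ₁ ⊗ υ₂)` of cost `cost γ₁ + cost γ₂`,
so `≤` holds. Conversely the first `p` and last `q` coordinates of any coupling of
`(μ ⊗ ν, υ₁ ⊗ υ₂)` are couplings of the factors whose costs add up to its cost, so `≥` holds.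
Finite second moments make all these costs integrable, which is what lets the Bochner integrals
split.
-/

section Couplings

variable {α β α' β' : Type*} [MeasurableSpace α] [MeasurableSpace β]
  [MeasurableSpace α'] [MeasurableSpace β'] {μ : Measure α} {ν : Measure β}
  {γ : Measure (α × β)}

lemma isProbabilityMeasure_of_mem_couplings [IsProbabilityMeasure μ]
    (hγ : γ ∈ Couplings μ ν) : IsProbabilityMeasure γ := by
  have : IsProbabilityMeasure (γ.map Prod.fst) := hγ.1 ▸ ‹_›
  exact Measure.isProbabilityMeasure_of_map Prod.fst

lemma prod_mem_couplings [IsProbabilityMeasure μ] [IsProbabilityMeasure ν] :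
    μ.prod ν ∈ Couplings μ ν :=
  ⟨by simp, by simp⟩

lemma map_prodMap_mem_couplings {f : α → α'} {g : β → β'} (hf : Measurable f)
    (hg : Measurable g) (hγ : γ ∈ Couplings μ ν) :
    γ.map (Prod.map f g) ∈ Couplings (μ.map f) (ν.map g) := by
  constructor
  · rw [Measure.map_map measurable_fst (hf.prodMap hg), ← hγ.1,
      Measure.map_map hf measurable_fst]
    rfl
  · rw [Measure.map_map measurable_snd (hf.prodMap hg), ← hγ.2,
      Measure.map_map hg measurable_snd]
    rfl

end Couplings

section QuadCost

variable {n : ℕ}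

noncomputable def quadCost (w : (Fin n → ℝ) × (Fin n → ℝ)) : ℝ :=
  ∑ i, (w.1 i - w.2 i) ^ 2

lemma quadCost_nonneg (w : (Fin n → ℝ) × (Fin n → ℝ)) : 0 ≤ quadCost w :=
  Finset.sum_nonneg fun _ _ => sq_nonneg _

@[fun_prop]
lemma continuous_quadCost : Continuous (quadCost (n := n)) := by
  unfold quadCost
  fun_prop

lemma quadCost_le (w : (Fin n → ℝ) × (Fin n → ℝ)) :
    quadCost w ≤ 2 * ∑ i, w.1 i ^ 2 + 2 * ∑ i, w.2 i ^ 2 := by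
  rw [quadCost, Finset.mul_sum, Finset.mul_sum, ← Finset.sum_add_distrib]
  gcongr with i
  nlinarith [sq_nonneg (w.1 i + w.2 i)]

lemma integrable_quadCost_of_mem_couplings {μ ν : Measure (Fin n → ℝ)}
    (hμ : HasFiniteSecondMoment μ) (hν : HasFiniteSecondMoment ν)
    {γ : Measure ((Fin n → ℝ) × (Fin n → ℝ))} (hγ : γ ∈ Couplings μ ν) :
    Integrable quadCost γ := by
  have h₁ : Integrable (fun w : (Fin n → ℝ) × (Fin n → ℝ) => ∑ i, w.1 i ^ 2) γ :=
    (hγ.1 ▸ hμ : Integrable (fun x => ∑ i, x i ^ 2) (γ.map Prod.fst)).comp_measurable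
      measurable_fst
  have h₂ : Integrable (fun w : (Fin n → ℝ) × (Fin n → ℝ) => ∑ i, w.2 i ^ 2) γ :=
    (hγ.2 ▸ hν : Integrable (fun x => ∑ i, x i ^ 2) (γ.map Prod.snd)).comp_measurable
      measurable_snd
  refine ((h₁.const_mul 2).add (h₂.const_mul 2)).mono
    continuous_quadCost.aestronglyMeasurable (ae_of_all _ fun w => ?_)
  rw [Real.norm_of_nonneg (quadCost_nonneg w)]
  exact (quadCost_le w).trans (le_abs_self _)

lemma W2sq_le_integral_quadCost {μ ν : Measure (Fin n → ℝ)}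
    {γ : Measure ((Fin n → ℝ) × (Fin n → ℝ))} (hγ : γ ∈ Couplings μ ν) :
    W2sq μ ν ≤ ∫ w, quadCost w ∂γ :=
  csInf_le ⟨0, by rintro _ ⟨γ', -, rfl⟩; exact integral_nonneg quadCost_nonneg⟩ ⟨γ, hγ, rfl⟩

lemma le_W2sq {μ ν : Measure (Fin n → ℝ)} [IsProbabilityMeasure μ] [IsProbabilityMeasure ν]
    {c : ℝ} (h : ∀ γ ∈ Couplings μ ν, c ≤ ∫ w, quadCost w ∂γ) : c ≤ W2sq μ ν :=
  le_csInf ⟨_, μ.prod ν, prod_mem_couplings, rfl⟩ (by rintro _ ⟨γ, hγ, rfl⟩; exact h γ hγ)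

lemma le_W2sq_add_W2sq {m : ℕ} {μ₁ ν₁ : Measure (Fin m → ℝ)} {μ₂ ν₂ : Measure (Fin n → ℝ)}
    [IsProbabilityMeasure μ₁] [IsProbabilityMeasure ν₁]
    [IsProbabilityMeasure μ₂] [IsProbabilityMeasure ν₂] {c : ℝ}
    (h : ∀ γ₁ ∈ Couplings μ₁ ν₁, ∀ γ₂ ∈ Couplings μ₂ ν₂,
      c ≤ ∫ w, quadCost w ∂γ₁ + ∫ w, quadCost w ∂γ₂) :
    c ≤ W2sq μ₁ ν₁ + W2sq μ₂ ν₂ := by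
  have h' : ∀ γ₂ ∈ Couplings μ₂ ν₂, c - ∫ w, quadCost w ∂γ₂ ≤ W2sq μ₁ ν₁ := fun γ₂ h₂ =>
    le_W2sq fun γ₁ h₁ => by linarith [h γ₁ h₁ γ₂ h₂]
  linarith [le_W2sq (c := c - W2sq μ₁ ν₁) fun γ₂ h₂ => by linarith [h' γ₂ h₂]]

end QuadCost

section Concatenation

variable {p q : ℕ}

def vecFst (p q : ℕ) {α : Type*} (x : Fin (p + q) → α) : Fin p → α :=
  fun i => x (Fin.castAdd q i)

def vecSnd (p q : ℕ) {α : Type*} (x : Fin (p + q) → α) : Fin q → α :=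
  fun j => x (Fin.natAdd p j)

@[fun_prop]
lemma measurable_vecFst {α : Type*} [MeasurableSpace α] :
    Measurable (vecFst p q (α := α)) :=
  measurable_pi_lambda _ fun _ => measurable_pi_apply _

@[fun_prop]
lemma measurable_vecSnd {α : Type*} [MeasurableSpace α] :
    Measurable (vecSnd p q (α := α)) :=
  measurable_pi_lambda _ fun _ => measurable_pi_apply _

@[fun_prop]
lemma measurable_pairToVec : Measurable (pairToVec p q) :=
  (Fin.continuous_append p q).measurable

lemma vecFst_comp_pairToVec : vecFst p q ∘ pairToVec p q = Prod.fst :=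
  funext fun z => funext fun i => Fin.append_left z.1 z.2 i

lemma vecSnd_comp_pairToVec : vecSnd p q ∘ pairToVec p q = Prod.snd :=
  funext fun z => funext fun j => Fin.append_right z.1 z.2 j

lemma quadCost_eq_add (w : (Fin (p + q) → ℝ) × (Fin (p + q) → ℝ)) :
    quadCost w = quadCost (Prod.map (vecFst p q) (vecFst p q) w) +
      quadCost (Prod.map (vecSnd p q) (vecSnd p q) w) :=
  Fin.sum_univ_add _

lemma integral_quadCost_eq_add {Γ : Measure ((Fin (p + q) → ℝ) × (Fin (p + q) → ℝ))}
    (h₁ : Integrable quadCost (Γ.map (Prod.map (vecFst p q) (vecFst p q))))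
    (h₂ : Integrable quadCost (Γ.map (Prod.map (vecSnd p q) (vecSnd p q)))) :
    ∫ w, quadCost w ∂Γ = ∫ w, quadCost w ∂(Γ.map (Prod.map (vecFst p q) (vecFst p q))) +
      ∫ w, quadCost w ∂(Γ.map (Prod.map (vecSnd p q) (vecSnd p q))) := by
  rw [integral_map (by fun_prop) continuous_quadCost.aestronglyMeasurable,
    integral_map (by fun_prop) continuous_quadCost.aestronglyMeasurable]
  exact (integral_congr_ae (ae_of_all _ quadCost_eq_add)).trans
    (integral_add (h₁.comp_measurable (by fun_prop)) (h₂.comp_measurable (by fun_prop)))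

lemma map_vecFst_mem_couplings {μ υ₁ : Measure (Fin p → ℝ)} {ν υ₂ : Measure (Fin q → ℝ)}
    [IsProbabilityMeasure ν] [IsProbabilityMeasure υ₂]
    {Γ : Measure ((Fin (p + q) → ℝ) × (Fin (p + q) → ℝ))}
    (hΓ : Γ ∈ Couplings ((μ.prod ν).map (pairToVec p q)) ((υ₁.prod υ₂).map (pairToVec p q))) :
    Γ.map (Prod.map (vecFst p q) (vecFst p q)) ∈ Couplings μ υ₁ := by
  simpa [Measure.map_map measurable_vecFst measurable_pairToVec, vecFst_comp_pairToVec,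
    measurePreserving_fst.map_eq] using map_prodMap_mem_couplings measurable_vecFst measurable_vecFst hΓ

lemma map_vecSnd_mem_couplings {μ υ₁ : Measure (Fin p → ℝ)} {ν υ₂ : Measure (Fin q → ℝ)}
    [IsProbabilityMeasure μ] [IsProbabilityMeasure υ₁] [SFinite ν] [SFinite υ₂]
    {Γ : Measure ((Fin (p + q) → ℝ) × (Fin (p + q) → ℝ))}
    (hΓ : Γ ∈ Couplings ((μ.prod ν).map (pairToVec p q)) ((υ₁.prod υ₂).map (pairToVec p q))) :
    Γ.map (Prod.map (vecSnd p q) (vecSnd p q)) ∈ Couplings ν υ₂ := by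
  simpa [Measure.map_map measurable_vecSnd measurable_pairToVec, vecSnd_comp_pairToVec,
    measurePreserving_snd.map_eq] using map_prodMap_mem_couplings measurable_vecSnd measurable_vecSnd hΓ

noncomputable def appendCoupling (γ₁ : Measure ((Fin p → ℝ) × (Fin p → ℝ)))
    (γ₂ : Measure ((Fin q → ℝ) × (Fin q → ℝ))) :
    Measure ((Fin (p + q) → ℝ) × (Fin (p + q) → ℝ)) :=
  (γ₁.prod γ₂).map fun z => (pairToVec p q (z.1.1, z.2.1), pairToVec p q (z.1.2, z.2.2))

lemma appendCoupling_mem_couplings {μ υ₁ : Measure (Fin p → ℝ)} {ν υ₂ : Measure (Fin q → ℝ)}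
    {γ₁ : Measure ((Fin p → ℝ) × (Fin p → ℝ))} {γ₂ : Measure ((Fin q → ℝ) × (Fin q → ℝ))}
    [SFinite γ₁] [SFinite γ₂] (h₁ : γ₁ ∈ Couplings μ υ₁) (h₂ : γ₂ ∈ Couplings ν υ₂) :
    appendCoupling γ₁ γ₂ ∈
      Couplings ((μ.prod ν).map (pairToVec p q)) ((υ₁.prod υ₂).map (pairToVec p q)) := by
  constructor
  · rw [appendCoupling, Measure.map_map measurable_fst (by fun_prop), ← h₁.1, ← h₂.1,
      Measure.map_prod_map _ _ measurable_fst measurable_fst,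
      Measure.map_map measurable_pairToVec (by fun_prop)]
    rfl
  · rw [appendCoupling, Measure.map_map measurable_snd (by fun_prop), ← h₁.2, ← h₂.2,
      Measure.map_prod_map _ _ measurable_snd measurable_snd,
      Measure.map_map measurable_pairToVec (by fun_prop)]
    rfl

lemma map_vecFst_appendCoupling (γ₁ : Measure ((Fin p → ℝ) × (Fin p → ℝ)))
    (γ₂ : Measure ((Fin q → ℝ) × (Fin q → ℝ))) [IsProbabilityMeasure γ₂] :
    (appendCoupling γ₁ γ₂).map (Prod.map (vecFst p q) (vecFst p q)) = γ₁ := by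
  rw [appendCoupling, Measure.map_map (by fun_prop) (by fun_prop)]
  refine (congrArg (Measure.map · (γ₁.prod γ₂)) ?_).trans measurePreserving_fst.map_eq
  funext z
  exact Prod.ext (congrFun vecFst_comp_pairToVec _) (congrFun vecFst_comp_pairToVec _)

lemma map_vecSnd_appendCoupling (γ₁ : Measure ((Fin p → ℝ) × (Fin p → ℝ)))
    (γ₂ : Measure ((Fin q → ℝ) × (Fin q → ℝ))) [IsProbabilityMeasure γ₁] [SFinite γ₂] :
    (appendCoupling γ₁ γ₂).map (Prod.map (vecSnd p q) (vecSnd p q)) = γ₂ := by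
  rw [appendCoupling, Measure.map_map (by fun_prop) (by fun_prop)]
  refine (congrArg (Measure.map · (γ₁.prod γ₂)) ?_).trans measurePreserving_snd.map_eq
  funext z
  exact Prod.ext (congrFun vecSnd_comp_pairToVec _) (congrFun vecSnd_comp_pairToVec _)

lemma integral_quadCost_appendCoupling {γ₁ : Measure ((Fin p → ℝ) × (Fin p → ℝ))}
    {γ₂ : Measure ((Fin q → ℝ) × (Fin q → ℝ))} [IsProbabilityMeasure γ₁]
    [IsProbabilityMeasure γ₂] (h₁ : Integrable quadCost γ₁) (h₂ : Integrable quadCost γ₂) :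
    ∫ w, quadCost w ∂(appendCoupling γ₁ γ₂) = ∫ w, quadCost w ∂γ₁ + ∫ w, quadCost w ∂γ₂ := by
  have hfst := map_vecFst_appendCoupling γ₁ γ₂
  have hsnd := map_vecSnd_appendCoupling γ₁ γ₂
  rw [integral_quadCost_eq_add, hfst, hsnd]
  · rwa [hfst]
  · rwa [hsnd]

end Concatenation

/-- `W₂²(μ ⊗ ν, υ₁ ⊗ υ₂) = W₂²(μ, υ₁) + W₂²(ν, υ₂)`. -/
theorem W2sq_prod_add (p q : ℕ)
    (μ υ₁ : Measure (Fin p → ℝ)) [IsProbabilityMeasure μ] [IsProbabilityMeasure υ₁]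
    (ν υ₂ : Measure (Fin q → ℝ)) [IsProbabilityMeasure ν] [IsProbabilityMeasure υ₂]
    (hμ : HasFiniteSecondMoment μ) (hν : HasFiniteSecondMoment ν)
    (hυ₁ : HasFiniteSecondMoment υ₁) (hυ₂ : HasFiniteSecondMoment υ₂) :
    W2sq ((μ.prod ν).map (pairToVec p q)) ((υ₁.prod υ₂).map (pairToVec p q)) =
      W2sq μ υ₁ + W2sq ν υ₂ := by
  have : IsProbabilityMeasure ((μ.prod ν).map (pairToVec p q)) :=
    Measure.isProbabilityMeasure_map measurable_pairToVec.aemeasurable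
  have : IsProbabilityMeasure ((υ₁.prod υ₂).map (pairToVec p q)) :=
    Measure.isProbabilityMeasure_map measurable_pairToVec.aemeasurable
  apply le_antisymm
  · refine le_W2sq_add_W2sq fun γ₁ h₁ γ₂ h₂ => ?_
    have := isProbabilityMeasure_of_mem_couplings h₁
    have := isProbabilityMeasure_of_mem_couplings h₂
    calc _ ≤ ∫ w, quadCost w ∂(appendCoupling γ₁ γ₂) :=
          W2sq_le_integral_quadCost (appendCoupling_mem_couplings h₁ h₂)
      _ = ∫ w, quadCost w ∂γ₁ + ∫ w, quadCost w ∂γ₂ :=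
          integral_quadCost_appendCoupling (integrable_quadCost_of_mem_couplings hμ hυ₁ h₁)
            (integrable_quadCost_of_mem_couplings hν hυ₂ h₂)
  · refine le_W2sq fun Γ hΓ => ?_
    have h₁ := map_vecFst_mem_couplings hΓ
    have h₂ := map_vecSnd_mem_couplings hΓ
    rw [integral_quadCost_eq_add (integrable_quadCost_of_mem_couplings hμ hυ₁ h₁)
      (integrable_quadCost_of_mem_couplings hν hυ₂ h₂)]
    exact add_le_add (W2sq_le_integral_quadCost h₁) (W2sq_le_integral_quadCost h₂)
end

section
/- Let Σ₁ ∈ 𝕊^p_≥ and Σ₂ ∈ 𝕊^q_≥, and let Σ_m be the block matrix with diagonal blocks Σ₁, Σ₂ and off-diagonal block Ψ_m = U₁Λ₁^{1/2}ΠΛ₂^{1/2}U₂ᵀ built from the eigendecompositions of Σ₁ and Σ₂. Then among all positive semidefinite matrices Σ with diagonal blocks Σ₁ and Σ₂, the matrix Σ_m maximizes trace(ΨΨᵀ), where Ψ is the off-diagonal block of Σ; the maximum value is Σ_{j=1}^{min(p,q)} λ_{j,1} λ_{j,2}, where λ_{j,1}, λ_{j,2} are the decreasingly ordered eigenvalues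 of Σ₁ and Σ₂. -/
open Matrix

/-- The `p × q` upper-left block of the identity matrix. -/
def PiBlock (p q : ℕ) : Matrix (Fin p) (Fin q) ℝ :=
  Matrix.of fun i j => if (i : ℕ) = (j : ℕ) then 1 else 0

/-- The maximal off-diagonal block `Ψ_m = U₁ Λ₁^{1/2} Π Λ₂^{1/2} U₂ᵀ`. -/
noncomputable def PsiM {p q : ℕ} (U₁ : Matrix (Fin p) (Fin p) ℝ)
    (l1 : Fin p → ℝ) (U₂ : Matrix (Fin q) (Fin q) ℝ) (l2 : Fin q → ℝ) :
    Matrix (Fin p) (Fin q) ℝ :=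
  U₁ * Matrix.diagonal (fun i => Real.sqrt (l1 i)) * PiBlock p q *
    Matrix.diagonal (fun j => Real.sqrt (l2 j)) * U₂ᵀ

/-- A partitioned `(p+q) × (p+q)` matrix with given blocks, indexed by `Fin (p+q)`. -/
def blockMat {p q : ℕ} (S₁ : Matrix (Fin p) (Fin p) ℝ) (Ψ : Matrix (Fin p) (Fin q) ℝ)
    (S₂ : Matrix (Fin q) (Fin q) ℝ) : Matrix (Fin (p + q)) (Fin (p + q)) ℝ :=
  (Matrix.fromBlocks S₁ Ψ Ψᵀ S₂).submatrix finSumFinEquiv.symm finSumFinEquiv.symm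

/-!
Conjugating by `diag(U₁, U₂)` reduces everything to `Σ₁ = diag a`, `Σ₂ = diag b` and
`K = U₁ᵀ Ψ U₂`, which has the same `trace (K Kᵀ) = ∑ K_ij²`. Cauchy–Schwarz for the form of
`[[diag a, K], [Kᵀ, diag b]] ⪰ 0` bounds every row and column sum of `d_ij = K_ij² / (a_i b_j)`
by `1`. Writing the decreasing sequences `a` and `b` as nonnegative combinations of indicators of
initial segments (Abel summation), `∑ d_ij a_i b_j ≤ ∑_{j < min p q} a_j b_j` reduces to
bounding the sum of `d` over an initial `(k+1) × (l+1)` block by `min (k+1) (l+1)`, which the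
row and column bounds give. The matrix `Σ_m` is congruent to `[[1, Π], [Πᵀ, 1]]`, whose Schur
complement `1 - Πᵀ Π` is a diagonal `0/1` matrix, and it attains the bound.
-/

open Finset

theorem Matrix.PosSemidef.fromBlocks_swap {m n : Type*} {A : Matrix m m ℝ} {B : Matrix m n ℝ}
    {C : Matrix n m ℝ} {D : Matrix n n ℝ} (h : (fromBlocks A B C D).PosSemidef) :
    (fromBlocks D C B A).PosSemidef := by
  simpa [fromBlocks_submatrix_sum_swap_sum_swap] using h.submatrix Sum.swap

section PosSemidefBlocks

variable {m n m' n' : Type*} [Fintype m] [Fintype n] [Fintype m'] [Fintype n']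

theorem Matrix.PosSemidef.sq_dotProduct_mulVec_le {M : Matrix n n ℝ} (hM : M.PosSemidef)
    (x y : n → ℝ) : (x ⬝ᵥ M *ᵥ y) ^ 2 ≤ (x ⬝ᵥ M *ᵥ x) * (y ⬝ᵥ M *ᵥ y) := by
  have hsymm : y ⬝ᵥ M *ᵥ x = x ⬝ᵥ M *ᵥ y := by
    rw [dotProduct_mulVec, ← mulVec_transpose, dotProduct_comm,
      ← conjTranspose_eq_transpose_of_trivial, hM.isHermitian.eq]
  have hquad : ∀ t : ℝ, 0 ≤ (y ⬝ᵥ M *ᵥ y) * (t * t) + (2 * (x ⬝ᵥ M *ᵥ y)) * t + x ⬝ᵥ M *ᵥ x := by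
    intro t
    have h := hM.dotProduct_mulVec_nonneg (x + t • y)
    simp only [star_trivial, mulVec_add, mulVec_smul, dotProduct_add, add_dotProduct,
      dotProduct_smul, smul_dotProduct, smul_eq_mul, hsymm] at h
    linarith
  have h := discrim_le_zero hquad
  rw [discrim] at h
  linarith

theorem Matrix.PosSemidef.fromBlocks_conj {A : Matrix m m ℝ} {B : Matrix m n ℝ}
    {D : Matrix n n ℝ} (h : (fromBlocks A B Bᵀ D).PosSemidef) (P : Matrix m' m ℝ)
    (Q : Matrix n' n ℝ) :
    (fromBlocks (P * A * Pᵀ) (P * B * Qᵀ) (P * B * Qᵀ)ᵀ (Q * D * Qᵀ)).PosSemidef := by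
  simpa [fromBlocks_conjTranspose, fromBlocks_transpose, fromBlocks_multiply, transpose_mul,
      Matrix.mul_assoc]
    using h.mul_mul_conjTranspose_same (fromBlocks P 0 0 Q)

theorem Matrix.PosSemidef.sq_dotProduct_mulVec_le_of_fromBlocks {A : Matrix m m ℝ}
    {B : Matrix m n ℝ} {D : Matrix n n ℝ} (h : (fromBlocks A B Bᵀ D).PosSemidef)
    (u : m → ℝ) (v : n → ℝ) :
    (u ⬝ᵥ B *ᵥ v) ^ 2 ≤ (u ⬝ᵥ A *ᵥ u) * (v ⬝ᵥ D *ᵥ v) := by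
  simpa [fromBlocks_mulVec, sumElim_dotProduct_sumElim] using
    h.sq_dotProduct_mulVec_le (Sum.elim u 0) (Sum.elim 0 v)

end PosSemidefBlocks

theorem blockMat_posSemidef_iff {p q : ℕ} (S₁ : Matrix (Fin p) (Fin p) ℝ)
    (Ψ : Matrix (Fin p) (Fin q) ℝ) (S₂ : Matrix (Fin q) (Fin q) ℝ) :
    (blockMat S₁ Ψ S₂).PosSemidef ↔ (fromBlocks S₁ Ψ Ψᵀ S₂).PosSemidef :=
  posSemidef_submatrix_equiv _

theorem transpose_mul_mul_eq_diagonal {n : Type*} [Fintype n] [DecidableEq n]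
    {U S : Matrix n n ℝ} {l : n → ℝ} (hU : U * Uᵀ = 1) (hS : S = U * diagonal l * Uᵀ) :
    Uᵀ * S * U = diagonal l := by
  rw [hS, Matrix.mul_assoc, Matrix.mul_assoc, mul_eq_one_comm.mp hU, Matrix.mul_one,
    ← Matrix.mul_assoc, mul_eq_one_comm.mp hU, Matrix.one_mul]

theorem nonneg_of_posSemidef_eq_mul_diagonal_mul {n : Type*} [Fintype n] [DecidableEq n]
    {U S : Matrix n n ℝ} {l : n → ℝ} (hS : S.PosSemidef) (hU : U * Uᵀ = 1)
    (hdec : S = U * diagonal l * Uᵀ) : 0 ≤ l := by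
  refine fun i => posSemidef_diagonal_iff.mp ?_ i
  rw [← transpose_mul_mul_eq_diagonal hU hdec]
  simpa using hS.conjTranspose_mul_mul_same U

theorem mul_diagonal_sqrt_mul_transpose {m n : Type*} [Fintype n] [DecidableEq n]
    (U : Matrix m n ℝ) {l : n → ℝ} (hl : 0 ≤ l) :
    U * diagonal (fun i => √(l i)) * (U * diagonal fun i => √(l i))ᵀ = U * diagonal l * Uᵀ := by
  rw [transpose_mul, diagonal_transpose, Matrix.mul_assoc, ← Matrix.mul_assoc (diagonal _),
    diagonal_mul_diagonal]
  simp only [Real.mul_self_sqrt (hl _)]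
  rw [Matrix.mul_assoc]

theorem trace_conj_mul_transpose {m n : Type*} [Fintype m] [Fintype n] [DecidableEq m]
    [DecidableEq n] {U₁ : Matrix m m ℝ} {U₂ : Matrix n n ℝ} (hU₁ : U₁ * U₁ᵀ = 1)
    (hU₂ : U₂ * U₂ᵀ = 1) (Ψ : Matrix m n ℝ) :
    (U₁ᵀ * Ψ * U₂ * (U₁ᵀ * Ψ * U₂)ᵀ).trace = (Ψ * Ψᵀ).trace := by
  simp only [transpose_mul, transpose_transpose, Matrix.mul_assoc]
  rw [← Matrix.mul_assoc U₂, hU₂, Matrix.one_mul, trace_mul_comm, Matrix.mul_assoc,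
    Matrix.mul_assoc Ψᵀ, hU₁, Matrix.mul_one]

theorem trace_mul_transpose_eq_sum_sq {m n : Type*} [Fintype m] [Fintype n] (M : Matrix m n ℝ) :
    (M * Mᵀ).trace = ∑ i, ∑ j, M i j ^ 2 := by
  simp [trace, mul_apply, sq]

theorem sum_Iic_PiBlock {p q : ℕ} {i : Fin p} {l : Fin q} (h : (i : ℕ) ≤ l) :
    ∑ j ∈ Iic l, PiBlock p q i j = 1 := by
  rw [sum_eq_single_of_mem ⟨i, by omega⟩ (by simpa [Fin.le_def] using h)]
  · simp [PiBlock]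
  · intro j _ hj
    simp [PiBlock, Fin.ext_iff] at hj ⊢
    omega

theorem PiBlock_transpose (p q : ℕ) : (PiBlock p q)ᵀ = PiBlock q p := by
  ext i j
  simp [PiBlock, eq_comm]

theorem transpose_PiBlock_mul_PiBlock (p q : ℕ) :
    (PiBlock p q)ᵀ * PiBlock p q = diagonal fun j : Fin q => if (j : ℕ) < p then 1 else 0 := by
  ext j k
  simp only [PiBlock, mul_apply, transpose_apply, of_apply, diagonal_apply, mul_ite, mul_one,
    mul_zero]
  by_cases hjk : j = k
  · subst hjk
    simp only [← ite_and, and_self]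
    rw [Fin.sum_univ_eq_sum_range (fun i => if i = (j : ℕ) then (1 : ℝ) else 0) p, sum_ite_eq']
    simp
  · rw [if_neg hjk]
    exact sum_eq_zero fun i _ => by
      split_ifs with h₁ h₂ <;> first | rfl | exact absurd (Fin.ext (h₂.symm.trans h₁)) hjk

theorem posSemidef_fromBlocks_one_PiBlock (p q : ℕ) :
    (fromBlocks 1 (PiBlock p q) (PiBlock p q)ᵀ 1).PosSemidef := by
  let : Invertible (1 : Matrix (Fin p) (Fin p) ℝ) := invertibleOne
  rw [← conjTranspose_eq_transpose_of_trivial, PosDef.fromBlocks₁₁ _ _ PosDef.one,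
    inv_one, Matrix.mul_one, conjTranspose_eq_transpose_of_trivial,
    transpose_PiBlock_mul_PiBlock, ← diagonal_one, diagonal_sub, posSemidef_diagonal_iff]
  intro j
  split_ifs <;> norm_num

theorem sum_PiBlock_mul {p q : ℕ} (f : Fin p → Fin q → ℝ) :
    ∑ i, ∑ j, PiBlock p q i j * f i j = ∑ k : Fin (min p q),
      f (Fin.castLE (Nat.min_le_left p q) k) (Fin.castLE (Nat.min_le_right p q) k) := by
  rw [← Fintype.sum_prod_type']
  symm
  refine Fintype.sum_of_injective
    (fun k => (Fin.castLE (Nat.min_le_left p q) k, Fin.castLE (Nat.min_le_right p q) k))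
    (fun k k' h => Fin.ext (by simpa [Fin.ext_iff] using congrArg (fun x => (x.1 : ℕ)) h)) _ _ ?_ ?_
  · rintro ⟨i, j⟩ hij
    simp only [PiBlock, of_apply, ite_mul, one_mul, zero_mul, ite_eq_right_iff]
    intro h
    exact absurd ⟨⟨i, lt_min i.2 (h ▸ j.2)⟩, by simp [Fin.ext_iff, h]⟩ hij
  · intro k
    simp [PiBlock]

section Decrement

variable {n : ℕ}

def extendByZero (a : Fin n → ℝ) (k : ℕ) : ℝ :=
  if h : k < n then a ⟨k, h⟩ else 0

def decrement (a : Fin n → ℝ) (k : ℕ) : ℝ :=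
  extendByZero a k - extendByZero a (k + 1)

@[simp]
theorem extendByZero_val (a : Fin n → ℝ) (i : Fin n) : extendByZero a i = a i :=
  dif_pos i.isLt

theorem extendByZero_of_le (a : Fin n → ℝ) {k : ℕ} (hk : n ≤ k) : extendByZero a k = 0 :=
  dif_neg hk.not_gt

theorem decrement_nonneg {a : Fin n → ℝ} (ha : Antitone a) (ha0 : 0 ≤ a) (k : Fin n) :
    0 ≤ decrement a k := by
  rw [decrement, sub_nonneg, extendByZero_val]
  by_cases hk : (k : ℕ) + 1 < n
  · rw [extendByZero, dif_pos hk]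
    exact ha (Fin.mk_le_mk.mpr (Nat.le_succ _))
  · rw [extendByZero_of_le a (not_lt.mp hk)]
    exact ha0 k

theorem sum_Ici_decrement (a : Fin n → ℝ) (i : Fin n) : ∑ k ∈ Ici i, decrement a k = a i :=
  calc ∑ k ∈ Ici i, decrement a k = ∑ k ∈ Ico (i : ℕ) n, decrement a k := by
        rw [← Fin.map_valEmbedding_Ici, sum_map]
        rfl
    _ = a i := by
        simpa only [decrement, neg_sub_neg, extendByZero_of_le a le_rfl, neg_zero, zero_sub,
          neg_neg, extendByZero_val] using
          sum_Ico_sub (fun k => -extendByZero a k) (Fin.is_le' (a := i))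

theorem sum_mul_eq_sum_decrement_mul (f a : Fin n → ℝ) :
    ∑ i, f i * a i = ∑ k : Fin n, decrement a k * ∑ i ∈ Iic k, f i := by
  simp_rw [← sum_Ici_decrement a, mul_sum]
  refine (sum_comm' fun i k => ?_).trans
    (sum_congr rfl fun k _ => sum_congr rfl fun i _ => mul_comm _ _)
  simp [and_comm]

theorem sum_sum_mul_mul_eq_sum_decrement {p q : ℕ} (w : Matrix (Fin p) (Fin q) ℝ)
    (a : Fin p → ℝ) (b : Fin q → ℝ) :
    ∑ i, ∑ j, w i j * (a i * b j) = ∑ k : Fin p, ∑ l : Fin q,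
      decrement a k * decrement b l * ∑ i ∈ Iic k, ∑ j ∈ Iic l, w i j := by
  calc ∑ i, ∑ j, w i j * (a i * b j) = ∑ i, (∑ j, w i j * b j) * a i := by
        simp only [sum_mul]; exact sum_congr rfl fun i _ => sum_congr rfl fun j _ => by ring
    _ = ∑ k : Fin p, decrement a k * ∑ j, (∑ i ∈ Iic k, w i j) * b j := by
        rw [sum_mul_eq_sum_decrement_mul]
        simp only [sum_mul]
        exact sum_congr rfl fun k _ => congrArg _ sum_comm
    _ = ∑ k : Fin p, decrement a k * ∑ l : Fin q,
          decrement b l * ∑ j ∈ Iic l, ∑ i ∈ Iic k, w i j :=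
        sum_congr rfl fun k _ => congrArg _ (sum_mul_eq_sum_decrement_mul _ _)
    _ = _ := by
        refine sum_congr rfl fun k _ => ?_
        rw [mul_sum]
        refine sum_congr rfl fun l _ => ?_
        rw [sum_comm (s := Iic l)]
        ring

end Decrement

theorem sum_Iic_sum_Iic_le_PiBlock_of_le {p q : ℕ} {d : Matrix (Fin p) (Fin q) ℝ}
    (hd : ∀ i j, 0 ≤ d i j) (hrow : ∀ i, ∑ j, d i j ≤ 1) {k : Fin p} {l : Fin q}
    (hkl : (k : ℕ) ≤ l) :
    ∑ i ∈ Iic k, ∑ j ∈ Iic l, d i j ≤ ∑ i ∈ Iic k, ∑ j ∈ Iic l, PiBlock p q i j :=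
  calc ∑ i ∈ Iic k, ∑ j ∈ Iic l, d i j ≤ ∑ i ∈ Iic k, ∑ j, d i j :=
        sum_le_sum fun i _ => sum_le_sum_of_subset_of_nonneg (subset_univ _) fun j _ _ => hd i j
    _ ≤ ∑ _i ∈ Iic k, 1 := sum_le_sum fun i _ => hrow i
    _ = ∑ i ∈ Iic k, ∑ j ∈ Iic l, PiBlock p q i j :=
        sum_congr rfl fun _ hi => (sum_Iic_PiBlock ((Fin.le_def.mp (mem_Iic.mp hi)).trans hkl)).symm

theorem sum_Iic_sum_Iic_le_PiBlock {p q : ℕ} {d : Matrix (Fin p) (Fin q) ℝ}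
    (hd : ∀ i j, 0 ≤ d i j) (hrow : ∀ i, ∑ j, d i j ≤ 1) (hcol : ∀ j, ∑ i, d i j ≤ 1)
    (k : Fin p) (l : Fin q) :
    ∑ i ∈ Iic k, ∑ j ∈ Iic l, d i j ≤ ∑ i ∈ Iic k, ∑ j ∈ Iic l, PiBlock p q i j := by
  rcases le_total (k : ℕ) l with hkl | hlk
  · exact sum_Iic_sum_Iic_le_PiBlock_of_le hd hrow hkl
  · have h := sum_Iic_sum_Iic_le_PiBlock_of_le (d := dᵀ) (fun j i => hd i j) hcol hlk
    simp only [← PiBlock_transpose p q, transpose_apply] at h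
    exact (sum_comm.trans_le h).trans_eq sum_comm

theorem sum_mul_mul_le_sum_PiBlock_mul {p q : ℕ} {a : Fin p → ℝ} {b : Fin q → ℝ}
    (ha : Antitone a) (hb : Antitone b) (ha0 : 0 ≤ a) (hb0 : 0 ≤ b)
    {d : Matrix (Fin p) (Fin q) ℝ} (hd : ∀ i j, 0 ≤ d i j) (hrow : ∀ i, ∑ j, d i j ≤ 1)
    (hcol : ∀ j, ∑ i, d i j ≤ 1) :
    ∑ i, ∑ j, d i j * (a i * b j) ≤ ∑ i, ∑ j, PiBlock p q i j * (a i * b j) := by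
  rw [sum_sum_mul_mul_eq_sum_decrement, sum_sum_mul_mul_eq_sum_decrement]
  refine sum_le_sum fun k _ => sum_le_sum fun l _ => mul_le_mul_of_nonneg_left ?_ ?_
  · exact sum_Iic_sum_Iic_le_PiBlock hd hrow hcol k l
  · exact mul_nonneg (decrement_nonneg ha ha0 k) (decrement_nonneg hb hb0 l)

section DiagonalBlocks

variable {m n : Type*} [Fintype m] [Fintype n] [DecidableEq m] [DecidableEq n]
  {a : m → ℝ} {b : n → ℝ} {K : Matrix m n ℝ}

theorem sq_le_mul_of_fromBlocks_diagonal
    (hM : (fromBlocks (diagonal a) K Kᵀ (diagonal b)).PosSemidef) (i : m) (j : n) :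
    K i j ^ 2 ≤ a i * b j := by
  simpa using hM.sq_dotProduct_mulVec_le_of_fromBlocks (Pi.single i 1) (Pi.single j 1)

theorem sum_sq_div_mul_le_one_of_fromBlocks_diagonal
    (hM : (fromBlocks (diagonal a) K Kᵀ (diagonal b)).PosSemidef) (i : m) :
    ∑ j, K i j ^ 2 / (a i * b j) ≤ 1 := by
  have ha : 0 ≤ a i := by simpa using hM.diag_nonneg (i := Sum.inl i)
  have hb : ∀ j, 0 ≤ b j := fun j => by simpa using hM.diag_nonneg (i := Sum.inr j)
  set Q := ∑ j, K i j ^ 2 / b j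
  have hQ : 0 ≤ Q := sum_nonneg fun j _ => div_nonneg (sq_nonneg _) (hb j)
  have hCS : Q ^ 2 ≤ a i * Q := by
    have h := hM.sq_dotProduct_mulVec_le_of_fromBlocks (Pi.single i 1) (fun j => K i j / b j)
    have e1 : Pi.single i 1 ⬝ᵥ K *ᵥ (fun j => K i j / b j) = Q := by
      rw [single_dotProduct, one_mul]
      simp [mulVec, dotProduct, sq, mul_div_assoc, Q]
    have e2 : (fun j => K i j / b j) ⬝ᵥ diagonal b *ᵥ (fun j => K i j / b j) = Q := by
      simp only [dotProduct, mulVec_diagonal, Q]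
      refine sum_congr rfl fun j _ => ?_
      rcases eq_or_ne (b j) 0 with h | h
      · simp [h]
      · field_simp
    simpa [e1, e2] using h
  have hQa : Q ≤ a i := by nlinarith
  calc ∑ j, K i j ^ 2 / (a i * b j) = Q / a i := by
        rw [sum_div]; simp only [div_div, mul_comm]
    _ ≤ 1 := div_le_one_of_le₀ hQa ha

end DiagonalBlocks

theorem sum_sq_le_sum_PiBlock_mul_of_fromBlocks_diagonal {p q : ℕ} {a : Fin p → ℝ}
    {b : Fin q → ℝ} (ha : Antitone a) (hb : Antitone b) {K : Matrix (Fin p) (Fin q) ℝ}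
    (hM : (fromBlocks (diagonal a) K Kᵀ (diagonal b)).PosSemidef) :
    ∑ i, ∑ j, K i j ^ 2 ≤ ∑ i, ∑ j, PiBlock p q i j * (a i * b j) := by
  have ha0 : 0 ≤ a := fun i => by simpa using hM.diag_nonneg (i := Sum.inl i)
  have hb0 : 0 ≤ b := fun j => by simpa using hM.diag_nonneg (i := Sum.inr j)
  have hM_swap : (fromBlocks (diagonal b) Kᵀ Kᵀᵀ (diagonal a)).PosSemidef := by
    simpa using hM.fromBlocks_swap
  -- Where `a i * b j = 0` the entry `K i j` vanishes too, so dividing by zero loses nothing.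
  have hK : ∀ i j, K i j ^ 2 = K i j ^ 2 / (a i * b j) * (a i * b j) := by
    intro i j
    rcases eq_or_ne (a i * b j) 0 with h | h
    · have hle := sq_le_mul_of_fromBlocks_diagonal hM i j
      rw [h] at hle
      rw [h, mul_zero, le_antisymm hle (sq_nonneg _)]
    · rw [div_mul_cancel₀ _ h]
  calc ∑ i, ∑ j, K i j ^ 2 = ∑ i, ∑ j, K i j ^ 2 / (a i * b j) * (a i * b j) :=
        sum_congr rfl fun i _ => sum_congr rfl fun j _ => hK i j
    _ ≤ _ := sum_mul_mul_le_sum_PiBlock_mul (d := fun i j => K i j ^ 2 / (a i * b j))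
        ha hb ha0 hb0 (fun i j => div_nonneg (sq_nonneg _) (mul_nonneg (ha0 i) (hb0 j)))
        (sum_sq_div_mul_le_one_of_fromBlocks_diagonal hM)
        fun j => by
          simpa [mul_comm] using sum_sq_div_mul_le_one_of_fromBlocks_diagonal hM_swap j

theorem posSemidef_fromBlocks_PsiM {p q : ℕ} {S₁ U₁ : Matrix (Fin p) (Fin p) ℝ}
    {S₂ U₂ : Matrix (Fin q) (Fin q) ℝ} {l1 : Fin p → ℝ} {l2 : Fin q → ℝ} (hl1 : 0 ≤ l1)
    (hl2 : 0 ≤ l2) (hdec1 : S₁ = U₁ * diagonal l1 * U₁ᵀ) (hdec2 : S₂ = U₂ * diagonal l2 * U₂ᵀ) :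
    (fromBlocks S₁ (PsiM U₁ l1 U₂ l2) (PsiM U₁ l1 U₂ l2)ᵀ S₂).PosSemidef := by
  have hPsiM : U₁ * diagonal (fun i => √(l1 i)) * PiBlock p q *
      (U₂ * diagonal fun j => √(l2 j))ᵀ = PsiM U₁ l1 U₂ l2 := by
    simp [PsiM, transpose_mul, Matrix.mul_assoc]
  have h := (posSemidef_fromBlocks_one_PiBlock p q).fromBlocks_conj
    (U₁ * diagonal fun i => √(l1 i)) (U₂ * diagonal fun j => √(l2 j))
  rwa [Matrix.mul_one, Matrix.mul_one, mul_diagonal_sqrt_mul_transpose _ hl1,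
    mul_diagonal_sqrt_mul_transpose _ hl2, ← hdec1, ← hdec2, hPsiM] at h

theorem trace_PsiM_mul_transpose {p q : ℕ} {U₁ : Matrix (Fin p) (Fin p) ℝ}
    {U₂ : Matrix (Fin q) (Fin q) ℝ} {l1 : Fin p → ℝ} {l2 : Fin q → ℝ} (hU₁ : U₁ * U₁ᵀ = 1)
    (hU₂ : U₂ * U₂ᵀ = 1) (hl1 : 0 ≤ l1) (hl2 : 0 ≤ l2) :
    (PsiM U₁ l1 U₂ l2 * (PsiM U₁ l1 U₂ l2)ᵀ).trace =
      ∑ i, ∑ j, PiBlock p q i j * (l1 i * l2 j) := by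
  have hfold : U₁ᵀ * PsiM U₁ l1 U₂ l2 * U₂ =
      diagonal (fun i => √(l1 i)) * PiBlock p q * diagonal fun j => √(l2 j) := by
    simp only [PsiM, Matrix.mul_assoc, mul_eq_one_comm.mp hU₂, Matrix.mul_one]
    rw [← Matrix.mul_assoc, mul_eq_one_comm.mp hU₁, Matrix.one_mul]
  rw [← trace_conj_mul_transpose hU₁ hU₂, hfold, trace_mul_transpose_eq_sum_sq]
  refine sum_congr rfl fun i _ => sum_congr rfl fun j _ => ?_
  simp only [mul_diagonal, diagonal_mul, PiBlock, of_apply]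
  split_ifs <;> simp [mul_pow, Real.sq_sqrt (hl1 i), Real.sq_sqrt (hl2 j)]

/-- among matrices in `Γ(Σ₁, Σ₂)`, the block `Ψ_m` maximizes `trace(ΨΨᵀ)`,
with maximal value `∑_{j=1}^{min(p,q)} λ_{j,1} λ_{j,2}`. -/
theorem PsiM_maximizes_trace {p q : ℕ}
    (S₁ : Matrix (Fin p) (Fin p) ℝ) (S₂ : Matrix (Fin q) (Fin q) ℝ)
    (hS₁ : S₁.PosSemidef) (hS₂ : S₂.PosSemidef)
    (U₁ : Matrix (Fin p) (Fin p) ℝ) (l1 : Fin p → ℝ)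
    (U₂ : Matrix (Fin q) (Fin q) ℝ) (l2 : Fin q → ℝ)
    (hU₁ : U₁ * U₁ᵀ = 1) (hU₂ : U₂ * U₂ᵀ = 1)
    (hl1 : Antitone l1) (hl2 : Antitone l2)
    (hdec1 : S₁ = U₁ * Matrix.diagonal l1 * U₁ᵀ)
    (hdec2 : S₂ = U₂ * Matrix.diagonal l2 * U₂ᵀ) :
    (blockMat S₁ (PsiM U₁ l1 U₂ l2) S₂).PosSemidef ∧
    (∀ Ψ : Matrix (Fin p) (Fin q) ℝ, (blockMat S₁ Ψ S₂).PosSemidef →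
      (Ψ * Ψᵀ).trace ≤ (PsiM U₁ l1 U₂ l2 * (PsiM U₁ l1 U₂ l2)ᵀ).trace) ∧
    (PsiM U₁ l1 U₂ l2 * (PsiM U₁ l1 U₂ l2)ᵀ).trace =
      ∑ j : Fin (min p q),
        l1 (Fin.castLE (Nat.min_le_left p q) j) * l2 (Fin.castLE (Nat.min_le_right p q) j) := by
  have hl1nn := nonneg_of_posSemidef_eq_mul_diagonal_mul hS₁ hU₁ hdec1
  have hl2nn := nonneg_of_posSemidef_eq_mul_diagonal_mul hS₂ hU₂ hdec2
  have htrace := trace_PsiM_mul_transpose hU₁ hU₂ hl1nn hl2nn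
  refine ⟨(blockMat_posSemidef_iff _ _ _).mpr (posSemidef_fromBlocks_PsiM hl1nn hl2nn hdec1 hdec2),
    fun Ψ hΨ => ?_, by rw [htrace, sum_PiBlock_mul]⟩
  have hK := ((blockMat_posSemidef_iff _ _ _).mp hΨ).fromBlocks_conj U₁ᵀ U₂ᵀ
  rw [transpose_transpose, transpose_transpose, transpose_mul_mul_eq_diagonal hU₁ hdec1,
    transpose_mul_mul_eq_diagonal hU₂ hdec2] at hK
  rw [htrace, ← trace_conj_mul_transpose hU₁ hU₂, trace_mul_transpose_eq_sum_sq]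
  exact sum_sq_le_sum_PiBlock_mul_of_fromBlocks_diagonal hl1 hl2 hK
end
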